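/- Let n be a positive integer and let r be an integer with (n-1)/2 ≤ r ≤ n-1. Define the n×n matrix Q_{r,n} = (q_{i,j}) by q_{i,j} = 2/n if i+j ≤ n-r or i+j ≥ n+r+2, and q_{i,j} = a_{i,j}/n otherwise. Then Q_{r,n} is a doubly stochastic matrix, and q_{i,j} ≠ 0 if and only if a_{i,j} = 1 (i.e., Q_{r,n} has the same support as A_{r,n}). -/

import Mathlib

/-!
Write `n • Q_{r,n} = A_{r,n} + C`, where `C` is the indicator of the two corners
`i + j ≤ n - r` and `i + j ≥ n + r + 2`; this is valid because for `n ≤ 2r + 1` the corners lie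
inside the band `|i - j| ≤ r`. Reversing the columns maps the corners of row `i` exactly onto
the complement of the band in row `i`, so every row of `A_{r,n} + C` sums to `n`. Both `A_{r,n}`
and `C` are symmetric, which gives the column sums.
-/

open Finset

section

variable {n : ℕ} (r : ℕ)

def InBand (i j : Fin n) : Prop :=
  |((i : ℕ) : ℤ) - ((j : ℕ) : ℤ)| ≤ r

-- Indices are 0-based here, hence the `+ 1`s against the 1-based conditions of the paper.
def InCorner (i j : Fin n) : Prop :=
  ((i : ℕ) + 1) + ((j : ℕ) + 1) ≤ n - r ∨ n + r + 2 ≤ ((i : ℕ) + 1) + ((j : ℕ) + 1)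

instance (i j : Fin n) : Decidable (InBand r i j) := inferInstanceAs (Decidable (_ ≤ _))

instance (i j : Fin n) : Decidable (InCorner r i j) := inferInstanceAs (Decidable (_ ∨ _))

variable {r}

theorem inBand_comm {i j : Fin n} : InBand r i j ↔ InBand r j i := by
  rw [InBand, InBand, abs_sub_comm]

theorem inCorner_comm {i j : Fin n} : InCorner r i j ↔ InCorner r j i := by
  rw [InCorner, InCorner, add_comm ((i : ℕ) + 1)]

theorem InCorner.inBand (hr : n ≤ 2 * r + 1) {i j : Fin n} (h : InCorner r i j) :
    InBand r i j := by
  have := i.isLt; have := j.isLt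
  rw [InBand, abs_le]
  rcases h with h | h <;> constructor <;> omega

theorem inCorner_rev_iff {i j : Fin n} : InCorner r i j.rev ↔ ¬ InBand r i j := by
  have := i.isLt; have := j.isLt
  rw [InCorner, InBand, Fin.val_rev, abs_le]
  omega

theorem card_inBand_add_card_inCorner (i : Fin n) :
    #{j | InBand r i j} + #{j | InCorner r i j} = n := by
  have hrev : #{j | InCorner r i j} = #{j | ¬ InBand r i j} :=
    card_equiv Fin.revPerm (by simp [← inCorner_rev_iff])
  rw [hrev, card_filter_add_card_filter_not, card_univ, Fintype.card_fin]

end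

noncomputable def firstClassQ (n r : ℕ) : Matrix (Fin n) (Fin n) ℝ := fun i j =>
  ((if InBand r i j then 1 else 0) + (if InCorner r i j then 1 else 0)) / n

section

variable {n r : ℕ}

theorem firstClassQ_apply_of_le (hr : n ≤ 2 * r + 1) (i j : Fin n) :
    firstClassQ n r i j =
      if InCorner r i j then 2 / (n : ℝ) else (if InBand r i j then 1 else 0) / n := by
  by_cases hc : InCorner r i j
  · rw [firstClassQ, if_pos (hc.inBand hr), if_pos hc, if_pos hc]
    norm_num
  · rw [firstClassQ, if_neg hc, if_neg hc, add_zero]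

theorem firstClassQ_nonneg (i j : Fin n) : 0 ≤ firstClassQ n r i j := by
  unfold firstClassQ
  positivity

theorem firstClassQ_comm (i j : Fin n) : firstClassQ n r i j = firstClassQ n r j i := by
  simp only [firstClassQ, inBand_comm (i := i), inCorner_comm (i := i)]

theorem sum_firstClassQ_row (i : Fin n) : ∑ j, firstClassQ n r i j = 1 := by
  have hn : (n : ℝ) ≠ 0 := Nat.cast_ne_zero.mpr i.pos.ne'
  simp only [firstClassQ, ← sum_div, sum_add_distrib, sum_boole]
  rw [← Nat.cast_add, card_inBand_add_card_inCorner, div_self hn]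

theorem firstClassQ_ne_zero_iff (hr : n ≤ 2 * r + 1) (i j : Fin n) :
    firstClassQ n r i j ≠ 0 ↔ InBand r i j := by
  have hn : (0 : ℝ) < n := Nat.cast_pos.mpr i.pos
  by_cases hb : InBand r i j
  · have : 0 < firstClassQ n r i j := by
      rw [firstClassQ, if_pos hb]
      positivity
    exact iff_of_true this.ne' hb
  · have hc : ¬ InCorner r i j := fun hc => hb (hc.inBand hr)
    simp [firstClassQ, hb, hc]

end

theorem first_class_Q_large_radius_doubly_stochastic_general (n r : ℕ)
    (hr1 : n ≤ 2 * r + 1)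
    (Q : Matrix (Fin n) (Fin n) ℝ)
    (hQ : ∀ i j : Fin n,
      Q i j =
        if ((i : ℕ) + 1) + ((j : ℕ) + 1) ≤ n - r
            ∨ n + r + 2 ≤ ((i : ℕ) + 1) + ((j : ℕ) + 1) then
          2 / (n : ℝ)
        else
          (if |((i : ℕ) : ℤ) - ((j : ℕ) : ℤ)| ≤ (r : ℤ) then (1 : ℝ) else 0)
            / (n : ℝ)) :
    (∀ i j, 0 ≤ Q i j) ∧
    (∀ i, ∑ j, Q i j = 1) ∧
    (∀ j, ∑ i, Q i j = 1) ∧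
    (∀ i j : Fin n, Q i j ≠ 0 ↔ |((i : ℕ) : ℤ) - ((j : ℕ) : ℤ)| ≤ (r : ℤ)) := by
  obtain rfl : Q = firstClassQ n r := by
    ext i j
    rw [hQ, firstClassQ_apply_of_le hr1]
    rfl
  refine ⟨firstClassQ_nonneg, sum_firstClassQ_row, fun j => ?_, firstClassQ_ne_zero_iff hr1⟩
  simp only [firstClassQ_comm _ j, sum_firstClassQ_row]

/-- The matrix `Q_{r,n}` (first class, case `(n-1)/2 ≤ r ≤ n-1`), defined with
1-based indices `i+1, j+1` by `q_{i,j} = 2/n` if `i+j ≤ n-r` or `i+j ≥ n+r+2`,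
and `q_{i,j} = a_{i,j}/n` otherwise, is a doubly stochastic matrix with the
same support as `A_{r,n}`. -/
theorem first_class_Q_large_radius_doubly_stochastic (n r : ℕ)
    (hn : 0 < n) (hr1 : n ≤ 2 * r + 1) (hr2 : r ≤ n - 1)
    (Q : Matrix (Fin n) (Fin n) ℝ)
    (hQ : ∀ i j : Fin n,
      Q i j =
        if ((i : ℕ) + 1) + ((j : ℕ) + 1) ≤ n - r
            ∨ n + r + 2 ≤ ((i : ℕ) + 1) + ((j : ℕ) + 1) then
          2 / (n : ℝ)
        else
          (if |((i : ℕ) : ℤ) - ((j : ℕ) : ℤ)| ≤ (r : ℤ) then (1 : ℝ) else 0)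
            / (n : ℝ)) :
    (∀ i j, 0 ≤ Q i j) ∧
    (∀ i, ∑ j, Q i j = 1) ∧
    (∀ j, ∑ i, Q i j = 1) ∧
    (∀ i j : Fin n, Q i j ≠ 0 ↔ |((i : ℕ) : ℤ) - ((j : ℕ) : ℤ)| ≤ (r : ℤ)) :=
  first_class_Q_large_radius_doubly_stochastic_general n r hr1 Q hQ
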